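/- Small-cycle Monge inequality: let u = v, u', v' be strings, with u having periodicity w, and let e = (u,u) (self-overlap), f = (v',u), f' = (u,u'), e' = (v',u'). Then |ov(e)| + |ov(e')| − |ov(f)| − |ov(f')| > |ov(e)| − max{|ov(f)|, |ov(f')|} − w. -/
import Mathlib


/-- A string `u` has periodicity `w` if `u[i] = u[i+w]` for all valid indices. -/
def hasPeriod {α : Type*} (s : List α) (p : ℕ) : Prop :=
  ∀ i, i + p < s.length → s[i]? = s[i + p]?

/-- `ovLen s t` is the length of `ov(s,t)`, the longest suffix of `s` that is a prefix of `t`. -/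
def ovLen {α : Type*} [DecidableEq α] (s t : List α) : ℕ :=
  Nat.findGreatest (fun k => k ≤ t.length ∧ s.drop (s.length - k) = t.take k) s.length

/-- `ovSelf u` is the length of `ov(u,u)`, the longest *proper* self-overlap of `u`
(of length `< |u|`). -/
def ovSelf {α : Type*} [DecidableEq α] (u : List α) : ℕ :=
  Nat.findGreatest (fun k => k < u.length ∧ u.drop (u.length - k) = u.take k) u.length

lemma ovLen_le_left {α : Type*} [DecidableEq α] (s t : List α) : ovLen s t ≤ s.length :=
  Nat.findGreatest_le _

lemma ovLen_spec {α : Type*} [DecidableEq α] (s t : List α) :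
    ovLen s t ≤ t.length ∧ s.drop (s.length - ovLen s t) = t.take (ovLen s t) := by
  have h0 : (fun k => k ≤ t.length ∧ s.drop (s.length - k) = t.take k) 0 := by simp
  exact Nat.findGreatest_spec (P := fun k => k ≤ t.length ∧ s.drop (s.length - k) = t.take k)
    (Nat.zero_le s.length) h0

lemma le_ovLen {α : Type*} [DecidableEq α] (s t : List α) (k : ℕ) (hks : k ≤ s.length)
    (hkt : k ≤ t.length) (h : s.drop (s.length - k) = t.take k) : k ≤ ovLen s t :=
  Nat.le_findGreatest hks ⟨hkt, h⟩

lemma period_mul {α : Type*} (u : List α) (w : ℕ) (hper : hasPeriod u w) :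
    ∀ t i, i + t * w < u.length → u[i]? = u[i + t * w]? := by
  intro t
  induction t with
  | zero => simp
  | succ t ih =>
    intro i h
    have hm : (t + 1) * w = t * w + w := by ring
    rw [hm] at h
    have h1 : i + t * w < u.length := by omega
    rw [ih i h1, hper (i + t * w) (by omega)]
    congr 1
    omega

lemma period_congr {α : Type*} (u : List α) (w : ℕ) (hper : hasPeriod u w)
    {i j : ℕ} (hij : i % w = j % w) (hi : i < u.length) (hj : j < u.length) :
    u[i]? = u[j]? := by
  rcases le_total i j with h | h
  · have hd : w ∣ (j - i) := (Nat.modEq_iff_dvd' h).mp hij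
    obtain ⟨t, ht⟩ := hd
    rw [Nat.mul_comm] at ht
    have : j = i + t * w := by omega
    rw [this]
    exact period_mul u w hper t i (by omega)
  · have hd : w ∣ (i - j) := (Nat.modEq_iff_dvd' h).mp hij.symm
    obtain ⟨t, ht⟩ := hd
    rw [Nat.mul_comm] at ht
    have : i = j + t * w := by omega
    rw [this]
    exact (period_mul u w hper t j (by omega)).symm

lemma drop_take_period_eq {α : Type*} (u : List α) (w : ℕ) (hper : hasPeriod u w)
    (a b k : ℕ) (hab : a % w = b % w) (ha : a + k ≤ u.length) (hb : b + k ≤ u.length) :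
    (u.drop a).take k = (u.drop b).take k := by
  apply List.ext_getElem?
  intro i
  by_cases hik : i < k
  · rw [List.getElem?_take_of_lt hik, List.getElem?_take_of_lt hik,
      List.getElem?_drop, List.getElem?_drop]
    apply period_congr u w hper
    · have : (a + i) % w = (b + i) % w := Nat.ModEq.add_right i hab
      exact this
    · omega
    · omega
  · have h1 : ((u.drop a).take k).length ≤ i := by
      simp [List.length_take, List.length_drop]; omega
    have h2 : ((u.drop b).take k).length ≤ i := by
      simp [List.length_take, List.length_drop]; omega
    rw [List.getElem?_eq_none h1, List.getElem?_eq_none h2]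

lemma key_lemma {α : Type*} [DecidableEq α] (u u' v' : List α) (w : ℕ)
    (hw : 0 < w) (hper : hasPeriod u w) :
    min (ovLen v' u) (ovLen u u') < ovLen v' u' + w := by
  set n := u.length with hn
  set f := ovLen v' u with hf
  set f' := ovLen u u' with hf'
  set m := min f f' with hm
  by_cases hmw : m < w
  · omega
  · -- m ≥ w
    obtain ⟨hfn, hfeq⟩ := ovLen_spec v' u
    obtain ⟨hf'n, hf'eq⟩ := ovLen_spec u u'
    have hfv : f ≤ v'.length := ovLen_le_left v' u
    have hf'u : f' ≤ n := ovLen_le_left u u'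
    set r := (n + m - f - f') % w with hr
    have hrw : r < w := Nat.mod_lt _ hw
    set k := m - r with hk
    have hmf : m ≤ f := min_le_left _ _
    have hmf' : m ≤ f' := min_le_right _ _
    -- the mod condition
    have hmod : (f - k) % w = (n - f') % w := by
      have h1 : f - k = (f - m) + r := by omega
      have h2 : ((f - m) + (n + m - f - f')) % w = ((f - m) + r) % w := by
        have := (Nat.mod_modEq (n + m - f - f') w).symm
        exact Nat.ModEq.add_left (f - m) this
      have h3 : (f - m) + (n + m - f - f') = n - f' := by omega
      rw [h1, ← h2, h3]
    have hsub : (u.drop (f - k)).take k = (u.drop (n - f')).take k :=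
      drop_take_period_eq u w hper _ _ k hmod (by omega) (by omega)
    have hkov : k ≤ ovLen v' u' := by
      apply le_ovLen
      · omega
      · omega
      · -- v'.drop (v'.length - k) = u'.take k
        have e1 : v'.drop (v'.length - k) = (v'.drop (v'.length - f)).drop (f - k) := by
          rw [List.drop_drop]
          congr 1
          omega
        have e2 : (u.take f).drop (f - k) = (u.drop (f - k)).take k := by
          rw [List.drop_take]
          congr 1
          omega
        have e3 : u'.take k = (u'.take f').take k := by
          rw [List.take_take]
          congr 1
          omega
        rw [e1, hfeq, e2, hsub, e3, ← hf'eq]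
    omega

/-- Small-cycle Monge inequality: with `u = v`, edges `e = (u,u)` (proper self-overlap),
`f = (v',u)`, `f' = (u,u')`, `e' = (v',u')`, and `u` of periodicity `w` (a positive
periodicity), we have
`|ov(e)| + |ov(e')| − |ov(f)| − |ov(f')| > |ov(e)| − max{|ov(f)|, |ov(f')|} − w`. -/
theorem small_cycle_monge {α : Type*} [DecidableEq α] (u u' v' : List α) (w : ℕ)
    (hw : 0 < w) (hper : hasPeriod u w) :
    (ovSelf u : ℤ) + (ovLen v' u' : ℤ) - (ovLen v' u : ℤ) - (ovLen u u' : ℤ) >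
      (ovSelf u : ℤ) - max (ovLen v' u : ℤ) (ovLen u u' : ℤ) - (w : ℤ) := by
  have key := key_lemma u u' v' w hw hper
  omega
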